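/- For every f ∈ L²(ℝ, ℂ) one has (1/2)·∬_{ℝ×ℝ} B_{1,0}(p,q) |f(p) − f(q)|² dp dq ≤ (∫_ℝ |f(p)|² dp) · (∫_ℝ B_{1,0}(0,q) dq). -/

import Mathlib

open MeasureTheory Real Filter

/-- The function `L_{T,μ}(p,q)`, extended continuously across `p²+q² = 2μ`. -/
noncomputable def Lfun (T μ p q : ℝ) : ℝ :=
  if p ^ 2 + q ^ 2 = 2 * μ then (1 - Real.tanh ((p ^ 2 - μ) / (2 * T)) ^ 2) / (2 * T)
  else (Real.tanh ((p ^ 2 - μ) / (2 * T)) + Real.tanh ((q ^ 2 - μ) / (2 * T))) /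
    (p ^ 2 + q ^ 2 - 2 * μ)

/-- `B_{T,μ}(p,q) = L_{T,μ}((p+q)/2, (p−q)/2)`. -/
noncomputable def Bfun (T μ p q : ℝ) : ℝ := Lfun T μ ((p + q) / 2) ((p - q) / 2)

/-- `F_{T,μ}(p) = tanh((p²−μ)/(2T))/(p²−μ)`, extended by `1/(2T)` at `p² = μ`. -/
noncomputable def Ffun (T μ p : ℝ) : ℝ :=
  if p ^ 2 = μ then 1 / (2 * T) else Real.tanh ((p ^ 2 - μ) / (2 * T)) / (p ^ 2 - μ)

/-- `a_{T,μ} = (1/(4π)) ∫ B_{T,μ}(0,q) dq`. -/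
noncomputable def aconst (T μ : ℝ) : ℝ := (1 / (4 * Real.pi)) * ∫ q : ℝ, Bfun T μ 0 q

/-- `A_{T,μ}(p) = (1/(4π)) ∫ B_{T,μ}(p,q) dq`. -/
noncomputable def Afun (T μ p : ℝ) : ℝ := (1 / (4 * Real.pi)) * ∫ q : ℝ, Bfun T μ p q

/-! By concavity of `tanh` on `[0, ∞)` and antitonicity of `tanh x / x` there, the kernel is
dominated by `min (h p) (h q)` with `h = B_{1,0}(0, ·)`. The layer-cake formula
`min (h p) (h q) = ∫₀^∞ 1[t < h p] 1[t < h q] dt` splits the form into the integrals of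
`|f p - f q|²` over the squares `S_t × S_t` of the superlevel sets `S_t = {h > t}`, and each of
these equals `2 |S_t| ∫_{S_t} |f|² - 2 |∫_{S_t} f|² ≤ 2 |S_t| ‖f‖²`. Integrating `|S_t|` over `t`
gives back `∫ h`. -/

open scoped ENNReal

namespace Real

theorem hasDerivAt_tanh (x : ℝ) : HasDerivAt tanh (1 - tanh x ^ 2) x := by
  have h := (hasDerivAt_sinh x).div (hasDerivAt_cosh x) (cosh_pos x).ne'
  have hfun : sinh / cosh = tanh := funext fun y => (tanh_eq_sinh_div_cosh y).symm
  rw [hfun] at h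
  refine h.congr_deriv ?_
  rw [tanh_eq_sinh_div_cosh]
  field_simp

theorem continuous_tanh : Continuous tanh :=
  continuous_iff_continuousAt.2 fun x => (hasDerivAt_tanh x).continuousAt

theorem deriv_tanh : deriv tanh = fun x => 1 - tanh x ^ 2 :=
  funext fun x => (hasDerivAt_tanh x).deriv

theorem tanh_strictMono : StrictMono tanh :=
  strictMono_of_deriv_pos fun x => by
    rw [deriv_tanh, sub_pos]; exact tanh_sq_lt_one x

theorem tanh_nonneg {x : ℝ} (hx : 0 ≤ x) : 0 ≤ tanh x :=
  tanh_zero ▸ tanh_strictMono.monotone hx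

theorem tanh_le_self {x : ℝ} (hx : 0 ≤ x) : tanh x ≤ x := by
  have hmono : Monotone fun y => y - tanh y :=
    monotone_of_deriv_nonneg (differentiable_id.sub fun y => (hasDerivAt_tanh y).differentiableAt)
      fun y => by
        have hd : HasDerivAt (fun y => y - tanh y) (1 - (1 - tanh y ^ 2)) y :=
          (hasDerivAt_id' y).sub (hasDerivAt_tanh y)
        rw [hd.deriv, sub_sub_cancel]; positivity
  simpa using hmono hx

theorem concaveOn_tanh : ConcaveOn ℝ (Set.Ici 0) tanh := by
  refine AntitoneOn.concaveOn_of_deriv (convex_Ici 0) continuous_tanh.continuousOn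
    (fun x _ => (hasDerivAt_tanh x).differentiableAt.differentiableWithinAt) ?_
  rw [interior_Ici, deriv_tanh]
  intro x hx y _ hxy
  exact sub_le_sub_left (pow_le_pow_left₀ (tanh_nonneg hx.le) (tanh_strictMono.monotone hxy) 2) 1

theorem tanh_add_tanh_le {a b : ℝ} (ha : 0 ≤ a) (hb : 0 ≤ b) :
    tanh a + tanh b ≤ 2 * tanh ((a + b) / 2) := by
  have := concaveOn_tanh.2 (Set.mem_Ici.2 ha) (Set.mem_Ici.2 hb) (by norm_num : (0:ℝ) ≤ 1 / 2)
    (by norm_num : (0:ℝ) ≤ 1 / 2) (by norm_num)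
  simp only [smul_eq_mul] at this
  rw [show 1 / 2 * a + 1 / 2 * b = (a + b) / 2 by ring] at this
  linarith

theorem tanh_mul_le_mul_tanh {x y : ℝ} (hx : 0 < x) (hxy : x ≤ y) :
    tanh y * x ≤ tanh x * y := by
  have hy : 0 < y := hx.trans_le hxy
  have := concaveOn_tanh.antitoneOn_slope_gt (Set.mem_Ici.2 le_rfl) ⟨Set.mem_Ici.2 hx.le, hx⟩
    ⟨Set.mem_Ici.2 hy.le, hy⟩ hxy
  simp only [slope_def_field, tanh_zero, sub_zero] at this
  rwa [div_le_div_iff₀ hy hx] at this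

theorem tanh_add_tanh_mul_le {a b x : ℝ} (ha : 0 ≤ a) (hb : 0 ≤ b) (hx : 0 < x)
    (hxab : 2 * x ≤ a + b) : (tanh a + tanh b) * x ≤ tanh x * (a + b) := by
  have hmid := tanh_mul_le_mul_tanh hx (by linarith : x ≤ (a + b) / 2)
  nlinarith [tanh_add_tanh_le ha hb]

end Real

theorem Lfun_neg_right (T μ r s : ℝ) : Lfun T μ r (-s) = Lfun T μ r s := by
  simp only [Lfun, neg_sq]

theorem Bfun_comm (T μ p q : ℝ) : Bfun T μ p q = Bfun T μ q p := by
  rw [Bfun, Bfun, add_comm, ← Lfun_neg_right, ← neg_div, neg_sub]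

theorem Lfun_one_zero (r s : ℝ) : Lfun 1 0 r s =
    if r ^ 2 + s ^ 2 = 0 then 1 / 2
    else (tanh (r ^ 2 / 2) + tanh (s ^ 2 / 2)) / (r ^ 2 + s ^ 2) := by
  simp only [Lfun, sub_zero, mul_one, mul_zero]
  split_ifs with h
  · rw [show r ^ 2 = 0 by nlinarith [sq_nonneg r, sq_nonneg s]]
    norm_num
  · rfl

theorem Lfun_one_zero_nonneg (r s : ℝ) : 0 ≤ Lfun 1 0 r s := by
  rw [Lfun_one_zero]
  split_ifs
  · norm_num
  · exact div_nonneg (add_nonneg (tanh_nonneg (by positivity)) (tanh_nonneg (by positivity)))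
      (by positivity)

theorem Lfun_one_zero_le_diag {r s c : ℝ} (h : 2 * c ^ 2 ≤ r ^ 2 + s ^ 2) :
    Lfun 1 0 r s ≤ Lfun 1 0 c c := by
  rw [Lfun_one_zero, Lfun_one_zero]
  rcases (sq_nonneg c).eq_or_lt with hc | hc
  · rw [← hc, zero_add, if_pos rfl]
    split_ifs with hrs
    · rfl
    rw [div_le_iff₀ (by positivity)]
    linarith [tanh_le_self (by positivity : 0 ≤ r ^ 2 / 2),
      tanh_le_self (by positivity : 0 ≤ s ^ 2 / 2)]
  · have hrs : 0 < r ^ 2 + s ^ 2 := by linarith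
    rw [if_neg hrs.ne', if_neg (by positivity), div_le_div_iff₀ hrs (by positivity)]
    nlinarith [tanh_add_tanh_mul_le (by positivity : 0 ≤ r ^ 2 / 2) (by positivity : 0 ≤ s ^ 2 / 2)
      (by positivity : 0 < c ^ 2 / 2) (by linarith)]

theorem Bfun_one_zero_nonneg (p q : ℝ) : 0 ≤ Bfun 1 0 p q := Lfun_one_zero_nonneg _ _

theorem Bfun_one_zero_le_Bfun_zero (p q : ℝ) : Bfun 1 0 p q ≤ Bfun 1 0 0 q := by
  rw [Bfun, Bfun, zero_add, zero_sub, neg_div, Lfun_neg_right]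
  exact Lfun_one_zero_le_diag (by nlinarith [sq_nonneg p])

theorem Bfun_one_zero_le_min (p q : ℝ) : Bfun 1 0 p q ≤ min (Bfun 1 0 0 p) (Bfun 1 0 0 q) :=
  le_min (Bfun_comm 1 0 p q ▸ Bfun_one_zero_le_Bfun_zero q p) (Bfun_one_zero_le_Bfun_zero p q)

theorem Bfun_one_zero_zero_le_inv_one_add_sq (q : ℝ) : Bfun 1 0 0 q ≤ 9 / 2 * (1 + q ^ 2)⁻¹ := by
  rw [Bfun, zero_add, zero_sub, neg_div, Lfun_neg_right, Lfun_one_zero]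
  split_ifs with hq
  · rw [show q = 0 by nlinarith [sq_nonneg q]]
    norm_num
  · have hq' : 0 < (q / 2) ^ 2 + (q / 2) ^ 2 := lt_of_le_of_ne (by positivity) (Ne.symm hq)
    rw [← div_eq_mul_inv, div_le_div_iff₀ hq' (by positivity)]
    nlinarith [tanh_le_self (by positivity : 0 ≤ (q / 2) ^ 2 / 2), tanh_lt_one ((q / 2) ^ 2 / 2)]

theorem measurable_Lfun (T μ : ℝ) : Measurable (Function.uncurry (Lfun T μ)) := by
  have htanh : ∀ g : ℝ × ℝ → ℝ, Measurable g → Measurable fun z => tanh ((g z ^ 2 - μ) / (2 * T)) :=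
    fun g hg => continuous_tanh.measurable.comp (by fun_prop)
  refine Measurable.ite (measurableSet_eq_fun (by fun_prop) measurable_const) ?_ ?_
  · exact ((htanh _ measurable_fst).pow_const 2).const_sub 1 |>.div_const _
  · exact ((htanh _ measurable_fst).add (htanh _ measurable_snd)).div (by fun_prop)

theorem measurable_Bfun (T μ : ℝ) : Measurable (Function.uncurry (Bfun T μ)) :=
  (measurable_Lfun T μ).comp (f := fun z : ℝ × ℝ => ((z.1 + z.2) / 2, (z.1 - z.2) / 2))
    (by fun_prop)

theorem integrable_Bfun_one_zero_zero : Integrable (Bfun 1 0 0) := by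
  refine (integrable_inv_one_add_sq.const_mul (9 / 2)).mono'
    ((measurable_Bfun 1 0).comp measurable_prodMk_left).aestronglyMeasurable
    (Eventually.of_forall fun q => ?_)
  rw [norm_of_nonneg (Bfun_one_zero_nonneg 0 q)]
  exact Bfun_one_zero_zero_le_inv_one_add_sq q

section Variance

variable {α 𝕜 : Type*} [MeasurableSpace α] [RCLike 𝕜] {μ : Measure α}

open RCLike ComplexConjugate

theorem MeasureTheory.MemLp.integral_prod_norm_sub_sq [IsFiniteMeasure μ] {f : α → 𝕜}
    (hf : MemLp f 2 μ) :
    ∫ z, ‖f z.1 - f z.2‖ ^ 2 ∂(μ.prod μ) =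
      2 * μ.real Set.univ * ∫ x, ‖f x‖ ^ 2 ∂μ - 2 * ‖∫ x, f x ∂μ‖ ^ 2 := by
  have hf1 : Integrable f μ := hf.integrable one_le_two
  have hf2 : Integrable (fun x => ‖f x‖ ^ 2) μ := hf.integrable_norm_pow two_ne_zero
  have hconj : Integrable (fun x => conj (f x)) μ :=
    (conjCLE : 𝕜 ≃L[ℝ] 𝕜).toContinuousLinearMap.integrable_comp hf1
  have hcross : Integrable (fun z : α × α => conj (f z.1) * f z.2) (μ.prod μ) :=
    hconj.mul_prod hf1
  have hfst : Integrable (fun z : α × α => ‖f z.1‖ ^ 2) (μ.prod μ) := hf2.comp_fst μ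
  have hsnd : Integrable (fun z : α × α => ‖f z.2‖ ^ 2) (μ.prod μ) := hf2.comp_snd μ
  have hexpand : (fun z : α × α => ‖f z.1 - f z.2‖ ^ 2) =
      fun z => ‖f z.1‖ ^ 2 - 2 * RCLike.re (conj (f z.1) * f z.2) + ‖f z.2‖ ^ 2 := by
    funext z
    rw [@norm_sub_sq 𝕜, RCLike.inner_apply, mul_comm (f z.2)]
  have hsub := hfst.sub (hcross.re.const_mul 2)
  rw [hexpand, integral_add ?_ hsnd, integral_sub hfst (hcross.re.const_mul 2), integral_const_mul,
    integral_re hcross, integral_prod_mul (fun x => conj (f x)) f, integral_conj, RCLike.conj_mul,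
    integral_fun_fst (fun x => ‖f x‖ ^ 2), integral_fun_snd (fun x => ‖f x‖ ^ 2)]
  · simp only [smul_eq_mul, ← ofReal_pow, ofReal_re]
    ring
  · exact hsub

theorem MeasureTheory.MemLp.setLIntegral_prod_norm_sub_sq_le [SFinite μ] {f : α → 𝕜}
    (hf : MemLp f 2 μ) {s : Set α} (hs : μ s ≠ ⊤) :
    ∫⁻ z in s ×ˢ s, ENNReal.ofReal (‖f z.1 - f z.2‖ ^ 2) ∂(μ.prod μ) ≤
      2 * ENNReal.ofReal (∫ x, ‖f x‖ ^ 2 ∂μ) * μ s := by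
  have : IsFiniteMeasure (μ.restrict s) := ⟨by rwa [Measure.restrict_apply_univ, lt_top_iff_ne_top]⟩
  have hfs := hf.restrict s
  have hint : Integrable (fun z : α × α => ‖f z.1 - f z.2‖ ^ 2)
      ((μ.restrict s).prod (μ.restrict s)) :=
    ((hfs.comp_fst _).sub (hfs.comp_snd _)).integrable_norm_pow two_ne_zero
  have hsub : ∫ x in s, ‖f x‖ ^ 2 ∂μ ≤ ∫ x, ‖f x‖ ^ 2 ∂μ :=
    setIntegral_le_integral (hf.integrable_norm_pow two_ne_zero)
      (Eventually.of_forall fun x => sq_nonneg _)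
  rw [← Measure.prod_restrict, ← ofReal_integral_eq_lintegral_ofReal hint
    (Eventually.of_forall fun z => sq_nonneg _), hfs.integral_prod_norm_sub_sq, Measure.real,
    Measure.restrict_apply_univ]
  calc _ ≤ ENNReal.ofReal (2 * (∫ x, ‖f x‖ ^ 2 ∂μ) * (μ s).toReal) := by
        refine ENNReal.ofReal_le_ofReal ?_
        nlinarith [mul_le_mul_of_nonneg_left hsub (ENNReal.toReal_nonneg (a := μ s)),
          sq_nonneg ‖∫ x in s, f x ∂μ‖]
    _ = _ := by
        rw [ENNReal.ofReal_mul (by positivity), ENNReal.ofReal_mul (by norm_num),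
          ENNReal.ofReal_toReal hs, ENNReal.ofReal_ofNat]

end Variance

theorem lintegral_ofReal_min_mul_le {α : Type*} [MeasurableSpace α] {μ : Measure α} [SFinite μ]
    {h : α → ℝ} (h_nonneg : 0 ≤ h) (hh : Measurable h) {w : α × α → ℝ≥0∞} (hw : Measurable w)
    {C : ℝ≥0∞} (hC : ∀ t > 0,
      ∫⁻ z in {x | t < h x} ×ˢ {x | t < h x}, w z ∂(μ.prod μ) ≤ C * μ {x | t < h x}) :
    ∫⁻ z, ENNReal.ofReal (min (h z.1) (h z.2)) * w z ∂(μ.prod μ) ≤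
      C * ∫⁻ x, ENNReal.ofReal (h x) ∂μ := by
  set g : α × α → ℝ → ℝ≥0∞ := fun z t => (Set.Iio (min (h z.1) (h z.2))).indicator (fun _ => w z) t
  have hlayer : ∀ z, ENNReal.ofReal (min (h z.1) (h z.2)) * w z = ∫⁻ t in Set.Ioi 0, g z t := by
    intro z
    rw [lintegral_indicator_const measurableSet_Iio, Measure.restrict_apply measurableSet_Iio,
      Set.Iio_inter_Ioi, Real.volume_Ioo, sub_zero, mul_comm]
  have hg : Measurable (Function.uncurry g) :=
    Measurable.ite (measurableSet_lt measurable_snd (by fun_prop)) (hw.comp measurable_fst)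
      measurable_const
  have hslice : ∀ t > 0, ∫⁻ z, g z t ∂(μ.prod μ) ≤ C * μ {x | t < h x} := fun t ht => by
    have hS : MeasurableSet {x | t < h x} := measurableSet_lt measurable_const hh
    refine le_trans (le_of_eq ?_) (hC t ht)
    rw [← lintegral_indicator (hS.prod hS)]
    refine lintegral_congr fun z => ?_
    simp only [g, Set.indicator_apply, Set.mem_Iio, Set.mem_prod, Set.mem_ofPred_eq, lt_min_iff]
  have hmeas : Measurable fun t => μ {x | t < h x} :=
    Antitone.measurable fun s t hst => measure_mono fun x hx => lt_of_le_of_lt hst hx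
  calc ∫⁻ z, ENNReal.ofReal (min (h z.1) (h z.2)) * w z ∂(μ.prod μ)
      = ∫⁻ t in Set.Ioi 0, ∫⁻ z, g z t ∂(μ.prod μ) := by
        simp_rw [hlayer]
        exact lintegral_lintegral_swap hg.aemeasurable
    _ ≤ ∫⁻ t in Set.Ioi 0, C * μ {x | t < h x} := setLIntegral_mono' measurableSet_Ioi hslice
    _ = C * ∫⁻ x, ENNReal.ofReal (h x) ∂μ := by
        rw [lintegral_const_mul _ hmeas,
          lintegral_eq_lintegral_meas_lt μ (Eventually.of_forall h_nonneg) hh.aemeasurable]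

theorem Bfun_quadratic_form_bound (f : Lp ℂ 2 (volume : Measure ℝ)) :
    (1 / 2) * ∫⁻ x : ℝ × ℝ, ENNReal.ofReal (Bfun 1 0 x.1 x.2 * ‖f x.1 - f x.2‖ ^ 2) ≤
      ENNReal.ofReal ((∫ p : ℝ, ‖f p‖ ^ 2) * ∫ q : ℝ, Bfun 1 0 0 q) := by
  have hB := integrable_Bfun_one_zero_zero
  have hkernel : ∫⁻ x : ℝ × ℝ, ENNReal.ofReal (Bfun 1 0 x.1 x.2 * ‖f x.1 - f x.2‖ ^ 2) ≤
      ∫⁻ x : ℝ × ℝ, ENNReal.ofReal (min (Bfun 1 0 0 x.1) (Bfun 1 0 0 x.2)) *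
        ENNReal.ofReal (‖f x.1 - f x.2‖ ^ 2) := lintegral_mono fun x => by
    rw [← ENNReal.ofReal_mul (le_min (Bfun_one_zero_nonneg 0 _) (Bfun_one_zero_nonneg 0 _))]
    exact ENNReal.ofReal_le_ofReal (by gcongr; exact Bfun_one_zero_le_min x.1 x.2)
  have hlayer := lintegral_ofReal_min_mul_le (μ := volume) (Bfun_one_zero_nonneg 0)
    ((measurable_Bfun 1 0).comp measurable_prodMk_left)
    (w := fun x => ENNReal.ofReal (‖f x.1 - f x.2‖ ^ 2)) (by fun_prop)
    fun t ht => (Lp.memLp f).setLIntegral_prod_norm_sub_sq_le (hB.measure_gt_lt_top ht).ne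
  rw [← ofReal_integral_eq_lintegral_ofReal hB (Eventually.of_forall (Bfun_one_zero_nonneg 0)),
    ← Measure.volume_eq_prod] at hlayer
  calc _ ≤ 1 / 2 * (2 * ENNReal.ofReal (∫ p, ‖f p‖ ^ 2) * ENNReal.ofReal (∫ q, Bfun 1 0 0 q)) := by
        gcongr; exact hkernel.trans hlayer
    _ = _ := by
        rw [← mul_assoc, ← mul_assoc, ENNReal.div_mul_cancel two_ne_zero ENNReal.ofNat_ne_top,
          one_mul, ← ENNReal.ofReal_mul (integral_nonneg fun p => sq_nonneg _)]
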